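/- Let ϱ : ℝ² → ℝ be smooth and define Y¹ = ϱ(ϱ_yy ϱ_xxy − 2 ϱ_xy ϱ_xyy + ϱ_xx ϱ_yyy) and Y² = −ϱ(ϱ_yy ϱ_xxx − 2 ϱ_xy ϱ_xxy + ϱ_xx ϱ_xyy). Then the vector field Y = Y¹∂_x + Y²∂_y satisfies the Poisson-cocycle equation [[P,Y]] = 0 for P = ϱ ∂_x ∧ ∂_y; explicitly, at every point of ℝ²: Y¹·ϱ_x + Y²·ϱ_y − ϱ·(∂_x Y¹ + ∂_y Y²) = 0. -/

import Mathlib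

/-- The partial derivative `∂/∂xⁱ` of a function on `ℝ² ≃ (Fin 2 → ℝ)`,
with `x = x¹ ↔ i = 0` and `y = x² ↔ i = 1`. -/
noncomputable def pd (i : Fin 2) (f : (Fin 2 → ℝ) → ℝ) : (Fin 2 → ℝ) → ℝ :=
  fun x => fderiv ℝ f x (Pi.single i 1)

namespace PDAux

variable {f g : (Fin 2 → ℝ) → ℝ}

@[fun_prop]
lemma pd_contDiff (hf : ContDiff ℝ (⊤:ℕ∞) f) (i : Fin 2) : ContDiff ℝ (⊤:ℕ∞) (pd i f) := by
  unfold pd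
  exact (hf.fderiv_right (by norm_cast)).clm_apply contDiff_const

lemma pd_mul (hf : ContDiff ℝ (⊤:ℕ∞) f) (hg : ContDiff ℝ (⊤:ℕ∞) g) (i : Fin 2) (x) :
    pd i (fun y => f y * g y) x = pd i f x * g x + f x * pd i g x := by
  unfold pd
  rw [fderiv_fun_mul (hf.differentiable (by norm_cast) x) (hg.differentiable (by norm_cast) x)]
  simp; ring

/-- Clairaut / Schwarz: mixed partial derivatives of a smooth function commute. -/
lemma pd_comm (hf : ContDiff ℝ (⊤:ℕ∞) f) (i j : Fin 2) :
    pd i (pd j f) = pd j (pd i f) := by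
  funext x
  unfold pd
  have hd : DifferentiableAt ℝ (fderiv ℝ f) x :=
    ((hf.fderiv_right (m := ((⊤:ℕ∞) : WithTop ℕ∞)) (by norm_cast)).differentiable
      (by norm_cast) x)
  rw [fderiv_clm_apply hd (differentiableAt_const _),
      fderiv_clm_apply hd (differentiableAt_const _)]
  simp only [fderiv_fun_const, Pi.zero_apply, ContinuousLinearMap.comp_zero, zero_add,
    ContinuousLinearMap.add_apply, ContinuousLinearMap.flip_apply]
  exact (hf.contDiffAt.isSymmSndFDerivAt (by simp only [minSmoothness_of_isRCLikeNormedField]; norm_cast)) _ _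

lemma pd_add (hf : ContDiff ℝ (⊤:ℕ∞) f) (hg : ContDiff ℝ (⊤:ℕ∞) g) (i : Fin 2) (x) :
    pd i (fun y => f y + g y) x = pd i f x + pd i g x := by
  unfold pd
  rw [fderiv_fun_add (hf.differentiable (by norm_cast) x) (hg.differentiable (by norm_cast) x)]
  simp

lemma pd_sub (hf : ContDiff ℝ (⊤:ℕ∞) f) (hg : ContDiff ℝ (⊤:ℕ∞) g) (i : Fin 2) (x) :
    pd i (fun y => f y - g y) x = pd i f x - pd i g x := by
  unfold pd
  rw [fderiv_fun_sub (hf.differentiable (by norm_cast) x) (hg.differentiable (by norm_cast) x)]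
  simp

lemma pd_cmul (hf : ContDiff ℝ (⊤:ℕ∞) f) (c : ℝ) (i : Fin 2) (x) :
    pd i (fun y => c * f y) x = c * pd i f x := by
  unfold pd
  rw [fderiv_const_mul (hf.differentiable (by norm_cast) x)]
  simp

lemma pd_const (c : ℝ) (i : Fin 2) (x) : pd i (fun _ => c) x = 0 := by
  unfold pd; rw [fderiv_fun_const]; simp

lemma pd_neg (i : Fin 2) (x) : pd i (fun y => -f y) x = -pd i f x := by
  unfold pd; rw [fderiv_fun_neg]; simp

end PDAux

/-- For smooth `ϱ : ℝ² → ℝ`, the vector field `Y = Y¹∂ₓ + Y²∂_y` with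
`Y¹ = ϱ(ϱ_yy ϱ_xxy − 2 ϱ_xy ϱ_xyy + ϱ_xx ϱ_yyy)` and
`Y² = −ϱ(ϱ_yy ϱ_xxx − 2 ϱ_xy ϱ_xxy + ϱ_xx ϱ_xyy)`
satisfies the Poisson-cocycle equation `[[P, Y]] = 0` for `P = ϱ ∂ₓ ∧ ∂_y`,
i.e. at every point `Y¹·ϱ_x + Y²·ϱ_y − ϱ·(∂ₓY¹ + ∂_yY²) = 0`. -/
theorem graph_vector_field_is_poisson_cocycle_2d
    (ϱ : (Fin 2 → ℝ) → ℝ) (hϱ : ContDiff ℝ (⊤ : ℕ∞) ϱ)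
    (Y1 Y2 : (Fin 2 → ℝ) → ℝ)
    (hY1 : Y1 = fun x => ϱ x *
      (pd 1 (pd 1 ϱ) x * pd 0 (pd 0 (pd 1 ϱ)) x
        - 2 * pd 0 (pd 1 ϱ) x * pd 0 (pd 1 (pd 1 ϱ)) x
        + pd 0 (pd 0 ϱ) x * pd 1 (pd 1 (pd 1 ϱ)) x))
    (hY2 : Y2 = fun x => -(ϱ x) *
      (pd 1 (pd 1 ϱ) x * pd 0 (pd 0 (pd 0 ϱ)) x
        - 2 * pd 0 (pd 1 ϱ) x * pd 0 (pd 0 (pd 1 ϱ)) x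
        + pd 0 (pd 0 ϱ) x * pd 0 (pd 1 (pd 1 ϱ)) x)) :
    ∀ x, Y1 x * pd 0 ϱ x + Y2 x * pd 1 ϱ x - ϱ x * (pd 0 Y1 x + pd 1 Y2 x) = 0 := by
  open PDAux in
  subst hY1 hY2
  intro x
  -- Clairaut normalization: move all `x`-derivatives outside.
  have c10 : pd 1 (pd 0 ϱ) = pd 0 (pd 1 ϱ) := pd_comm hϱ 1 0
  have c100 : pd 1 (pd 0 (pd 0 ϱ)) = pd 0 (pd 0 (pd 1 ϱ)) := by
    rw [pd_comm (pd_contDiff hϱ 0) 1 0, c10]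
  have c101 : pd 1 (pd 0 (pd 1 ϱ)) = pd 0 (pd 1 (pd 1 ϱ)) :=
    pd_comm (pd_contDiff hϱ 1) 1 0
  have c1000 : pd 1 (pd 0 (pd 0 (pd 0 ϱ))) = pd 0 (pd 0 (pd 0 (pd 1 ϱ))) := by
    rw [pd_comm (pd_contDiff (pd_contDiff hϱ 0) 0) 1 0, c100]
  have c1001 : pd 1 (pd 0 (pd 0 (pd 1 ϱ))) = pd 0 (pd 0 (pd 1 (pd 1 ϱ))) := by
    rw [pd_comm (pd_contDiff (pd_contDiff hϱ 1) 0) 1 0, c101]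
  have c1011 : pd 1 (pd 0 (pd 1 (pd 1 ϱ))) = pd 0 (pd 1 (pd 1 (pd 1 ϱ))) :=
    pd_comm (pd_contDiff (pd_contDiff hϱ 1) 1) 1 0
  simp (disch := fun_prop) only [pd_mul, pd_sub, pd_add, pd_cmul, pd_neg, pd_const]
  rw [c100, c101, c1000, c1001, c1011]
  ring
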